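/- Let G be a countable locally finite group, A a finite alphabet, X ⊆ A^G a nonempty G-SFT, and {F_n} a Følner sequence for G. If log|L_{F_n}(X)| / |F_n| → 0 as n → ∞ (i.e., X has zero topological entropy), then X = {x} for a single configuration x which is a fixed point: σ^g x = x for all g ∈ G. -/

import Mathlib

/-!
If the forbidden patterns of an SFT `X` live on the shape `F₀`, let `H` be the subgroup generated
by `F₀`, which is finite by local finiteness. Every window `F₀ g` lies in the right coset `H g`, so
points of `X` may be chosen independently on each right coset and glued to a point of `X`. If `X`
had two points differing somewhere, then for every nonempty finite `F` this would give at least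
`2 ^ (|F| / |H|)` patterns on `F`, i.e. `log |L_F(X)| / |F| ≥ log 2 / |H| > 0`, contradicting zero
entropy. Hence `X` is a single point, which is fixed because `X` is shift-invariant.
-/

open scoped Pointwise symmDiff

namespace LFPaper

variable {G A B : Type*}

/-- The right shift action: `(shift g x) h = x (h * g)`. -/
def shift [Group G] (g : G) (x : G → A) : G → A := fun h => x (h * g)

/-- Restriction of a configuration to a finite shape. -/
def restrictF (F : Finset G) (x : G → A) : F → A := fun a => x a

/-- A `G`-shift space: a closed, shift-invariant subset of the full shift. -/
def IsShiftSpace [Group G] [TopologicalSpace A] (X : Set (G → A)) : Prop :=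
  IsClosed X ∧ ∀ g : G, ∀ x ∈ X, shift g x ∈ X

/-- A `G`-shift of finite type: the set of configurations avoiding a finite
set of forbidden patterns on a finite shape. -/
def IsSFT [Group G] (X : Set (G → A)) : Prop :=
  ∃ (F : Finset G) (P : Set (F → A)),
    X = {x : G → A | ∀ g : G, restrictF F (shift g x) ∉ P}

/-- The `F`-language of `X`: all restrictions of elements of `X` to `F`. -/
def language (X : Set (G → A)) (F : Finset G) : Set (F → A) :=
  {w | ∃ x ∈ X, restrictF F x = w}

/-- Strong irreducibility of a shift. -/
def StronglyIrreducible [Group G] (X : Set (G → A)) : Prop :=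
  ∃ K : Finset G, ∀ (Fu Fv : Finset G) (u : Fu → A) (v : Fv → A),
    Disjoint (Fu : Set G) ((K : Set G) * (Fv : Set G)) →
    u ∈ language X Fu → v ∈ language X Fv →
    ∃ x ∈ X, restrictF Fu x = u ∧ restrictF Fv x = v

/-- The free `G`-extension of an `H`-shift `Y`: all configurations whose
restriction to every right coset of `H` (pulled back to `H`) lies in `Y`. -/
def freeExt [Group G] (H : Subgroup G) (Y : Set (H → A)) : Set (G → A) :=
  {x : G → A | ∀ g : G, (fun h : H => x ((h : G) * g)) ∈ Y}

/-- Local finiteness of a group: every finitely generated subgroup is finite. -/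
def IsLocallyFinite (G : Type*) [Group G] : Prop :=
  ∀ S : Finset G, Finite ↥(Subgroup.closure (S : Set G))

/-- A (left) Følner sequence for a countable group. -/
def IsFolner [Group G] (F : ℕ → Finset G) : Prop :=
  (∀ n, (F n).Nonempty) ∧ (∀ g : G, ∃ n, g ∈ F n) ∧
  ∀ g : G, Filter.Tendsto
    (fun n => (Set.ncard ((((fun h => g * h) '' (F n : Set G))) ∆ ((F n : Set G))) : ℝ) /
      ((F n).card : ℝ))
    Filter.atTop (nhds 0)

/-- Cardinality of the `F`-language. -/
noncomputable def langCard (X : Set (G → A)) (F : Finset G) : ℕ :=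
  (language X F).ncard

/-- A shift-commuting self-homeomorphism of `X` (an automorphism of the shift `X`). -/
def IsAutomorphism [Group G] [TopologicalSpace A] (X : Set (G → A)) (φ : Equiv.Perm X) : Prop :=
  Continuous φ ∧ Continuous φ.symm ∧
  ∀ (g : G) (x y : X), (y : G → A) = shift g (x : G → A) →
    (φ y : G → A) = shift g ((φ x : G → A))

theorem shift_shift [Group G] (g g' : G) (x : G → A) :
    shift g' (shift g x) = shift (g' * g) x := by
  funext h
  simp only [shift, mul_assoc]

/-- The shift written `X^G[P]` in the paper. -/
def avoiding [Group G] (F₀ : Finset G) (P : Set (F₀ → A)) : Set (G → A) :=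
  {x | ∀ g : G, restrictF F₀ (shift g x) ∉ P}

section Avoiding

variable [Group G] {F₀ : Finset G} {P : Set (F₀ → A)}

theorem shift_mem_avoiding {x : G → A} (hx : x ∈ avoiding F₀ P) (g : G) :
    shift g x ∈ avoiding F₀ P := fun g' => by
  rw [shift_shift]
  exact hx (g' * g)

theorem mem_avoiding_of_forall_exists {y : G → A}
    (hy : ∀ g, ∃ z ∈ avoiding F₀ P, ∀ f ∈ F₀, y (f * g) = z (f * g)) :
    y ∈ avoiding F₀ P := fun g => by
  obtain ⟨z, hz, hyz⟩ := hy g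
  have hwindow : restrictF F₀ (shift g y) = restrictF F₀ (shift g z) :=
    funext fun f => hyz f f.2
  rw [hwindow]
  exact hz g

/-- Each window `F₀ * g` lies in the single right coset `H * g`. -/
theorem glue_mem_avoiding {H : Subgroup G} (hF₀ : (F₀ : Set G) ⊆ H)
    (w : Quotient (QuotientGroup.rightRel H) → G → A) (hw : ∀ C, w C ∈ avoiding F₀ P) :
    (fun k => w (Quotient.mk _ k) k) ∈ avoiding F₀ P := by
  refine mem_avoiding_of_forall_exists fun g => ⟨w (Quotient.mk _ g), hw _, fun f hf => ?_⟩
  have hcoset : Quotient.mk (QuotientGroup.rightRel H) (f * g) = Quotient.mk _ g := by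
    refine Quotient.sound (QuotientGroup.rightRel_apply.2 ?_)
    simpa [mul_assoc] using inv_mem (hF₀ hf)
  simp only [hcoset]

open Classical in
theorem two_pow_card_image_le_langCard [Finite A] {H : Subgroup G} (hF₀ : (F₀ : Set G) ⊆ H)
    {x x' : G → A} (hx : x ∈ avoiding F₀ P) (hx' : x' ∈ avoiding F₀ P) (hxx' : x 1 ≠ x' 1)
    (F : Finset G) :
    2 ^ (F.image (Quotient.mk (QuotientGroup.rightRel H))).card ≤
      langCard (avoiding F₀ P) F := by
  set q := Quotient.mk (QuotientGroup.rightRel H)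
  set T := F.image q
  -- representatives inside `F`, so that the restriction to `F` sees every coset-wise choice
  choose rep hrepF hrepq using fun C : T => Finset.mem_image.1 C.2
  let w (b : T → Bool) (C : Quotient (QuotientGroup.rightRel H)) : G → A :=
    if hC : C ∈ T then shift (rep ⟨C, hC⟩)⁻¹ (if b ⟨C, hC⟩ then x else x') else x
  have hw : ∀ b C, w b C ∈ avoiding F₀ P := fun b C => by
    by_cases hC : C ∈ T
    · simp only [w, dif_pos hC]
      split_ifs <;> exact shift_mem_avoiding ‹_› _
    · simpa only [w, dif_neg hC] using hx
  have hw_rep : ∀ b C, w b (q (rep C)) (rep C) = (if b C then x else x') 1 := fun b C => by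
    simp only [w, hrepq, Subtype.coe_eta, C.2, dif_pos, shift, mul_inv_cancel]
  let Φ (b : T → Bool) : F → A := restrictF F fun k => w b (q k) k
  have hΦ_mem : Set.range Φ ⊆ language (avoiding F₀ P) F := by
    rintro _ ⟨b, rfl⟩
    exact ⟨_, glue_mem_avoiding hF₀ (w b) (hw b), rfl⟩
  have hΦ_inj : Function.Injective Φ := fun b b' hbb' => funext fun C => by
    have hC := congrFun hbb' ⟨rep C, hrepF C⟩
    simp only [Φ, restrictF, hw_rep] at hC
    cases hb : b C <;> cases hb' : b' C <;> simp_all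
  calc 2 ^ T.card = Nat.card (T → Bool) := by simp
    _ = (Set.range Φ).ncard := (Set.ncard_range_of_injective hΦ_inj).symm
    _ ≤ langCard (avoiding F₀ P) F := Set.ncard_le_ncard hΦ_mem (Set.toFinite _)

end Avoiding

open Classical in
theorem card_le_card_mul_card_image_rightRel [Group G] (H : Subgroup G) [Finite H]
    (F : Finset G) :
    F.card ≤ Nat.card H * (F.image (Quotient.mk (QuotientGroup.rightRel H))).card := by
  refine Finset.card_le_mul_card_image F _ fun C _ => ?_
  have hmem : ∀ k ∈ F.filter (Quotient.mk _ · = C), k * C.out⁻¹ ∈ H := fun k hk =>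
    QuotientGroup.rightRel_apply.1 <|
      Quotient.exact ((Quotient.out_eq C).trans (Finset.mem_filter.1 hk).2.symm)
  rw [← Nat.card_eq_finsetCard]
  exact Nat.card_le_card_of_injective (fun k => ⟨k * C.out⁻¹, hmem k k.2⟩)
    fun k k' h => Subtype.ext (mul_right_cancel (congrArg Subtype.val h))

section Entropy

variable [Group G] [Finite A] {F₀ : Finset G} {P : Set (F₀ → A)} {H : Subgroup G} [Finite H]

theorem log_two_div_card_le_log_langCard_div_card (hF₀ : (F₀ : Set G) ⊆ H)
    {x x' : G → A} (hx : x ∈ avoiding F₀ P) (hx' : x' ∈ avoiding F₀ P) (hxx' : x 1 ≠ x' 1)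
    {F : Finset G} (hF : F.Nonempty) :
    Real.log 2 / Nat.card H ≤ Real.log (langCard (avoiding F₀ P) F) / F.card := by
  classical
  set T := F.image (Quotient.mk (QuotientGroup.rightRel H))
  have hcard : (F.card : ℝ) ≤ Nat.card H * T.card := by
    exact_mod_cast card_le_card_mul_card_image_rightRel H F
  have hlang : ((2 ^ T.card : ℕ) : ℝ) ≤ langCard (avoiding F₀ P) F := by
    exact_mod_cast two_pow_card_image_le_langCard hF₀ hx hx' hxx' F
  have hH : (0 : ℝ) < Nat.card H := by exact_mod_cast Nat.card_pos
  have hFpos : (0 : ℝ) < F.card := by exact_mod_cast hF.card_pos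
  calc Real.log 2 / Nat.card H ≤ T.card * Real.log 2 / F.card := by
        rw [div_le_div_iff₀ hH hFpos]
        nlinarith [Real.log_nonneg one_le_two]
    _ = Real.log ((2 ^ T.card : ℕ) : ℝ) / F.card := by push_cast; rw [Real.log_pow]
    _ ≤ Real.log (langCard (avoiding F₀ P) F) / F.card := by gcongr

theorem subsingleton_avoiding_of_tendsto_entropy_zero (hF₀ : (F₀ : Set G) ⊆ H)
    {F : ℕ → Finset G} (hF : ∀ n, (F n).Nonempty)
    (hent : Filter.Tendsto (fun n => Real.log (langCard (avoiding F₀ P) (F n)) / (F n).card)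
      Filter.atTop (nhds 0)) :
    (avoiding F₀ P).Subsingleton := by
  intro x hx x' hx'
  by_contra hxx'
  obtain ⟨g, hg⟩ := Function.ne_iff.1 hxx'
  have hlow n := log_two_div_card_le_log_langCard_div_card hF₀ (shift_mem_avoiding hx g)
    (shift_mem_avoiding hx' g) (by simpa only [shift, one_mul] using hg) (hF n)
  have hpos : 0 < Real.log 2 / Nat.card H := div_pos (Real.log_pos one_lt_two) (by simp)
  exact (ge_of_tendsto' hent hlow).not_gt hpos

end Entropy

theorem zero_entropy_SFT_is_fixed_point_general [Group G] (hLF : IsLocallyFinite G)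
    [Fintype A] (X : Set (G → A)) (hX : IsSFT X) (hne : X.Nonempty)
    (F : ℕ → Finset G) (hF : IsFolner F)
    (hent : Filter.Tendsto
      (fun n => Real.log (langCard X (F n)) / ((F n).card : ℝ)) Filter.atTop (nhds 0)) :
    ∃ x : G → A, X = {x} ∧ ∀ g : G, shift g x = x := by
  obtain ⟨F₀, P, rfl⟩ : ∃ (F₀ : Finset G) (P : Set (F₀ → A)), X = avoiding F₀ P := hX
  have : Finite (Subgroup.closure (F₀ : Set G)) := hLF F₀
  have hsub := subsingleton_avoiding_of_tendsto_entropy_zero Subgroup.subset_closure hF.1 hent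
  obtain ⟨x, hx⟩ := hne
  exact ⟨x, hsub.eq_singleton_of_mem hx, fun g => hsub (shift_mem_avoiding hx g) hx⟩

/-- Over a countable locally finite group, a nonempty `G`-SFT with zero
topological entropy is a single fixed point. -/
theorem zero_entropy_SFT_is_fixed_point [Group G] [Countable G] (hLF : IsLocallyFinite G)
    [Fintype A] [Nonempty A] (X : Set (G → A)) (hX : IsSFT X) (hne : X.Nonempty)
    (F : ℕ → Finset G) (hF : IsFolner F)
    (hent : Filter.Tendsto
      (fun n => Real.log (langCard X (F n)) / ((F n).card : ℝ)) Filter.atTop (nhds 0)) :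
    ∃ x : G → A, X = {x} ∧ ∀ g : G, shift g x = x :=
  zero_entropy_SFT_is_fixed_point_general hLF X hX hne F hF hent

end LFPaper
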